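/- There exists a constant c > 0 such that for every integer j ≥ 1 there exists an integer n with n ≥ 2j and (n+1)^{4/3} · |J(π − π/(n+1)) − θ_{n,j}| ≤ c. (Note that θ_{n,⌊n/2⌋} = π − π/(n+1) for every n ≥ 1.) -/

import Mathlib

noncomputable section

open Real

/-- The L-shaped arc `γ₀`. -/
def gamma0 : Set ℂ :=
  ((fun x : ℝ => (-1 + Complex.I) * (x : ℂ)) '' Set.Icc 0 ((27 : ℝ) ^ ((1 : ℝ) / 4) / Real.sqrt 2)) ∪
  ((fun x : ℝ => (-1 - Complex.I) * (x : ℂ)) '' Set.Icc 0 ((27 : ℝ) ^ ((1 : ℝ) / 4) / Real.sqrt 2))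

/-- The exterior conformal map `ψ₀` (principal branch of the square root;
at `w = ±1` Lean's conventions give `ψ₀(±1) = 0`, matching the continuous extension). -/
def psi0 (w : ℂ) : ℂ := (w - 1 / w) * ((w - 1) / (w + 1)) ^ ((1 : ℂ) / 2)

def thetaAux (n k : ℕ) : ℝ :=
  if n % 2 = 0 then 2 * (k : ℝ) * Real.pi / ((n : ℝ) + 1)
  else (2 * (k : ℝ) + 1) * Real.pi / ((n : ℝ) + 1)

/-- The angles `θ_{n,k}`, `0 ≤ k ≤ n`. -/
def theta (n k : ℕ) : ℝ :=
  if k ≤ n / 2 then thetaAux n k else - thetaAux n (2 * (n / 2) + 1 - k)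

/-- The function `J : [2π/3, π] → [0, 2π/3]`; for `t ∈ [2π/3, π]` the set below is a
singleton by strict monotonicity of `x ↦ sin x · sin²(x/2)` on `[0, 2π/3]`. -/
def Jfun (t : ℝ) : ℝ :=
  sInf {s : ℝ | s ∈ Set.Icc 0 (2 * Real.pi / 3) ∧
    Real.sin s * Real.sin (s / 2) ^ 2 = Real.sin t * Real.sin (t / 2) ^ 2}

/-- The inverse function `J⁻¹ : [0, 2π/3] → [2π/3, π]`. -/
def Jinvfun (s : ℝ) : ℝ :=
  sInf {t : ℝ | t ∈ Set.Icc (2 * Real.pi / 3) Real.pi ∧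
    Real.sin t * Real.sin (t / 2) ^ 2 = Real.sin s * Real.sin (s / 2) ^ 2}

def rho (n : ℕ) : ℝ := 1 + 1 / ((n : ℝ) + 1)

/-- The Fejér points `z*_{n,k}` on `γ₀`. -/
def zstar (n k : ℕ) : ℂ := psi0 (Complex.exp (Complex.I * (theta n k : ℂ)))

/-- The points `ζ*_{n,k}` on the level curve `Γ_n`. -/
def zetas (n k : ℕ) : ℂ := psi0 ((rho n : ℂ) * Complex.exp (Complex.I * (theta n k : ℂ)))

/-- `ω_n(z) = ∏_{k=0}^n (z − z*_{n,k})`. -/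
def omegaF (n : ℕ) : ℂ → ℂ := fun z => ∏ k ∈ Finset.range (n + 1), (z - zstar n k)

def sigmaSgn (t : ℝ) : ℝ := if 0 ≤ t then 1 else -1

/-- `k₁(t)`: the smallest index `k ≤ n` with `|θ_{n,k}| ≤ 2π/3` minimizing `|θ_{n,k} − t|`. -/
def k1 (n : ℕ) (t : ℝ) : ℕ :=
  sInf {k : ℕ | k ≤ n ∧ abs (theta n k) ≤ 2 * Real.pi / 3 ∧
    ∀ j, j ≤ n → abs (theta n j) ≤ 2 * Real.pi / 3 →
      abs (theta n k - t) ≤ abs (theta n j - t)}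

/-- `k₂(t)`: the smallest index `k ≤ n` with `2π/3 < |θ_{n,k}| < π` minimizing
`|θ_{n,k} − σ(t)·J⁻¹(|t|)|`. -/
def k2 (n : ℕ) (t : ℝ) : ℕ :=
  sInf {k : ℕ | k ≤ n ∧ 2 * Real.pi / 3 < abs (theta n k) ∧ abs (theta n k) < Real.pi ∧
    ∀ j, j ≤ n → 2 * Real.pi / 3 < abs (theta n j) → abs (theta n j) < Real.pi →
      abs (theta n k - sigmaSgn t * Jinvfun (abs t)) ≤
        abs (theta n j - sigmaSgn t * Jinvfun (abs t))}

/-- `(j,k)` is an adjustment pair. -/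
def AdjPair (n j k : ℕ) : Prop :=
  j ≤ n ∧ k ≤ n ∧ 0 ≤ theta n j ∧ theta n j ≤ 2 * Real.pi / 3 ∧
  2 * Real.pi / 3 < theta n k ∧ theta n k < Real.pi ∧
  |theta n j - Jfun (theta n k)| < 2 * Real.pi / (3 * ((n : ℝ) + 1))

/-- The adjustment conditions (i)–(v) on `θ̃ : {0,…,n} → ℝ`. -/
def AdjCond (n : ℕ) (θt : ℕ → ℝ) : Prop :=
  (∀ j, j ≤ n → 0 ≤ theta n j → theta n j ≤ 2 * Real.pi / 3 →
    (∀ k, ¬ AdjPair n j k) → θt j = theta n j) ∧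
  (∀ j k, AdjPair n j k → Jfun (theta n k) ≤ theta n j →
    θt j = Jfun (theta n k) + 2 * Real.pi / (3 * ((n : ℝ) + 1)) ∧
    θt k = theta n j - 2 * Real.pi / (3 * ((n : ℝ) + 1))) ∧
  (∀ j k, AdjPair n j k → theta n j < Jfun (theta n k) →
    θt j = Jfun (theta n k) - 2 * Real.pi / (3 * ((n : ℝ) + 1)) ∧
    θt k = theta n j + 2 * Real.pi / (3 * ((n : ℝ) + 1))) ∧
  (∀ k, k ≤ n → 2 * Real.pi / 3 < theta n k → theta n k < Real.pi →
    (∀ j, ¬ AdjPair n j k) → θt k = Jfun (theta n k)) ∧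
  (∀ k, n / 2 < k → k ≤ n → θt k = - θt (2 * (n / 2) + 1 - k))

/-- `dist(z, Γ_n) = inf_{|w| = ρ_n} |z − ψ₀(w)|`. -/
def distGamma (n : ℕ) (z : ℂ) : ℝ :=
  Metric.infDist z (psi0 '' {w : ℂ | ‖w‖ = rho n})

/-- `∫_{γ₀} |P(z)|^p |dz|`. -/
def Pint (p : ℝ) (P : Polynomial ℂ) : ℝ :=
  Real.sqrt 2 * ∫ x in (0 : ℝ)..((27 : ℝ) ^ ((1 : ℝ) / 4) / Real.sqrt 2),
    ((‖P.eval ((-1 + Complex.I) * (x : ℂ))‖) ^ p +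
     (‖P.eval ((-1 - Complex.I) * (x : ℂ))‖) ^ p)

-- auxiliary
private def fS (x : ℝ) : ℝ := Real.sin x * Real.sin (x / 2) ^ 2

private lemma fS_cont : Continuous fS := by unfold fS; fun_prop

private lemma fS_hasDeriv (x : ℝ) :
    HasDerivAt fS (Real.sin (x / 2) * Real.sin (x + x / 2)) x := by
  have h2 : HasDerivAt (fun y : ℝ => Real.sin (y / 2)) (Real.cos (x / 2) * (1 / 2)) x := by
    exact (Real.hasDerivAt_sin (x / 2)).comp x ((hasDerivAt_id x).div_const 2)
  have h := (Real.hasDerivAt_sin x).mul (h2.pow 2)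
  refine HasDerivAt.congr_deriv (f := fS) h ?_
  simp only [Pi.pow_apply]
  rw [Real.sin_add]
  push_cast
  ring

private lemma fS_mono : StrictMonoOn fS (Set.Icc 0 (2 * π / 3)) := by
  apply strictMonoOn_of_deriv_pos (convex_Icc _ _) fS_cont.continuousOn
  intro x hx
  rw [interior_Icc, Set.mem_Ioo] at hx
  rw [(fS_hasDeriv x).deriv]
  have hπ := Real.pi_pos
  have h1 : 0 < Real.sin (x / 2) :=
    Real.sin_pos_of_pos_of_lt_pi (by linarith [hx.1]) (by linarith [hx.2])
  have h2 : 0 < Real.sin (x + x / 2) :=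
    Real.sin_pos_of_pos_of_lt_pi (by linarith [hx.1]) (by linarith [hx.2])
  positivity

private lemma fS_anti : StrictAntiOn fS (Set.Icc (2 * π / 3) π) := by
  apply strictAntiOn_of_deriv_neg (convex_Icc _ _) fS_cont.continuousOn
  intro x hx
  rw [interior_Icc, Set.mem_Ioo] at hx
  rw [(fS_hasDeriv x).deriv]
  have hπ := Real.pi_pos
  have h1 : 0 < Real.sin (x / 2) :=
    Real.sin_pos_of_pos_of_lt_pi (by linarith [hx.1]) (by linarith [hx.2])
  have h2 : Real.sin (x + x / 2) < 0 := by
    have h3 : 0 < Real.sin (x + x / 2 - π) :=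
      Real.sin_pos_of_pos_of_lt_pi (by linarith [hx.1]) (by linarith [hx.2])
    rw [Real.sin_sub_pi] at h3
    linarith
  exact mul_neg_of_pos_of_neg h1 h2

private lemma Jfun_eq {t s : ℝ} (ht : t ∈ Set.Icc (2 * π / 3) π)
    (hs : s ∈ Set.Icc 0 (2 * π / 3)) (h : fS s = fS t) : Jfun t = s := by
  have hset : {s' : ℝ | s' ∈ Set.Icc 0 (2 * Real.pi / 3) ∧
      Real.sin s' * Real.sin (s' / 2) ^ 2 = Real.sin t * Real.sin (t / 2) ^ 2} = {s} := by
    ext s'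
    simp only [Set.mem_setOf_eq, Set.mem_singleton_iff]
    constructor
    · rintro ⟨hs', he⟩
      exact fS_mono.injOn hs' hs (by simpa [fS] using he.trans (show fS t = fS s from h.symm))
    · rintro rfl
      exact ⟨hs, by simpa [fS] using h⟩
  rw [Jfun, hset, csInf_singleton]

private lemma abs_sin_le_self {y : ℝ} (hy : 0 ≤ y) : |Real.sin y| ≤ y :=
  (Real.abs_sin_le_abs).trans_eq (abs_of_nonneg hy)

private lemma fS_le_cube {x : ℝ} (hx : 0 ≤ x) : fS x ≤ x ^ 3 / 4 := by
  have h1 : Real.sin x ≤ x := Real.sin_le hx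
  have h2 : Real.sin (x / 2) ^ 2 ≤ (x / 2) ^ 2 := Real.sin_sq_le_sq
  have h3 : (0 : ℝ) ≤ Real.sin (x / 2) ^ 2 := sq_nonneg _
  rcases le_or_gt 0 (Real.sin x) with h | h
  · calc fS x ≤ x * (x / 2) ^ 2 := mul_le_mul h1 h2 h3 hx
      _ = x ^ 3 / 4 := by ring
  · have h4 : fS x ≤ 0 := mul_nonpos_of_nonpos_of_nonneg h.le h3
    nlinarith

private lemma fS_pi_sub_le {ε : ℝ} (h0 : 0 ≤ ε) (h : ε ≤ π) : fS (π - ε) ≤ ε := by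
  rw [fS, Real.sin_pi_sub]
  have h1 : Real.sin ε ≤ ε := Real.sin_le h0
  have h2 : Real.sin ((π - ε) / 2) ^ 2 ≤ 1 := Real.sin_sq_le_one _
  have h3 : 0 ≤ Real.sin ε := Real.sin_nonneg_of_nonneg_of_le_pi h0 h
  nlinarith

private lemma fS_pi_sub_ge {ε : ℝ} (h0 : 0 ≤ ε) (h : ε ≤ π / 2) : ε / π ≤ fS (π - ε) := by
  have hπ := Real.pi_pos
  have h1 : 2 / π * ε ≤ Real.sin ε := Real.mul_le_sin h0 h
  have hc : Real.sqrt 2 / 2 ≤ Real.cos (ε / 2) := by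
    have := Real.cos_le_cos_of_nonneg_of_le_pi (by linarith : (0:ℝ) ≤ ε / 2)
      (by linarith : π / 4 ≤ π) (by linarith : ε / 2 ≤ π / 4)
    rwa [Real.cos_pi_div_four] at this
  have hc2 : (1 : ℝ) / 2 ≤ Real.cos (ε / 2) ^ 2 := by
    have hs2 : (0:ℝ) ≤ Real.sqrt 2 / 2 := by positivity
    nlinarith [Real.sq_sqrt (by norm_num : (2:ℝ) ≥ 0)]
  rw [fS, Real.sin_pi_sub, show (π - ε) / 2 = π / 2 - ε / 2 by ring, Real.sin_pi_div_two_sub]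
  have h3 : 0 ≤ Real.sin ε := le_trans (by positivity) h1
  calc ε / π = (2 / π * ε) * (1 / 2) := by field_simp
    _ ≤ Real.sin ε * Real.cos (ε / 2) ^ 2 := mul_le_mul h1 hc2 (by norm_num) h3

private lemma fS_ge_cube {s : ℝ} (h0 : 0 ≤ s) (h : s ≤ π / 2) : 2 * s ^ 3 / π ^ 3 ≤ fS s := by
  have hπ := Real.pi_pos
  have h1 : 2 / π * s ≤ Real.sin s := Real.mul_le_sin h0 h
  have h2 : 2 / π * (s / 2) ≤ Real.sin (s / 2) := Real.mul_le_sin (by linarith) (by linarith)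
  have h3 : (2 / π * (s / 2)) ^ 2 ≤ Real.sin (s / 2) ^ 2 := by
    apply pow_le_pow_left₀ (by positivity) h2
  calc 2 * s ^ 3 / π ^ 3 = (2 / π * s) * (2 / π * (s / 2)) ^ 2 := by field_simp
    _ ≤ Real.sin s * Real.sin (s / 2) ^ 2 :=
        mul_le_mul h1 h3 (by positivity) (le_trans (by positivity) h1)

private lemma fS_slope {a b : ℝ} (hab : a < b) :
    ∃ ξ ∈ Set.Ioo a b, fS b - fS a = Real.sin (ξ / 2) * Real.sin (ξ + ξ / 2) * (b - a) := by
  obtain ⟨ξ, hξ, he⟩ := exists_hasDerivAt_eq_slope fS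
    (fun x => Real.sin (x / 2) * Real.sin (x + x / 2)) hab fS_cont.continuousOn
    (fun x _ => fS_hasDeriv x)
  refine ⟨ξ, hξ, ?_⟩
  rw [he, div_mul_cancel₀]
  exact sub_ne_zero.2 hab.ne'

private lemma fderiv_abs_le {ξ : ℝ} (h : 0 ≤ ξ) :
    |Real.sin (ξ / 2) * Real.sin (ξ + ξ / 2)| ≤ 3 * ξ ^ 2 / 4 := by
  rw [abs_mul]
  have h1 : |Real.sin (ξ / 2)| ≤ ξ / 2 := abs_sin_le_self (by linarith)
  have h2 : |Real.sin (ξ + ξ / 2)| ≤ ξ + ξ / 2 := abs_sin_le_self (by linarith)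
  calc |Real.sin (ξ / 2)| * |Real.sin (ξ + ξ / 2)| ≤ (ξ / 2) * (ξ + ξ / 2) :=
        mul_le_mul h1 h2 (abs_nonneg _) (by linarith)
    _ = 3 * ξ ^ 2 / 4 := by ring

private lemma abs_sin_mul_le_one (a b : ℝ) : |Real.sin a * Real.sin b| ≤ 1 := by
  rw [abs_mul]
  exact mul_le_one₀ (abs_le.2 ⟨Real.neg_one_le_sin a, Real.sin_le_one a⟩) (abs_nonneg _)
    (abs_le.2 ⟨Real.neg_one_le_sin b, Real.sin_le_one b⟩)

private lemma fderiv_low {ξ : ℝ} (h0 : 0 < ξ) (h : ξ ≤ π / 2) :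
    ξ ^ 2 / 8 ≤ Real.sin (ξ / 2) * Real.sin (ξ + ξ / 2) := by
  have hπl : (3.1415 : ℝ) < π := by linarith [Real.pi_gt_d6]
  have hπu : π < (3.1416 : ℝ) := by linarith [Real.pi_lt_d6]
  have h1 : 2 / π * (ξ / 2) ≤ Real.sin (ξ / 2) := Real.mul_le_sin (by linarith) (by linarith)
  have h1' : 0.318 * ξ ≤ Real.sin (ξ / 2) := by
    refine le_trans ?_ h1
    rw [div_mul_eq_mul_div, le_div_iff₀ (by linarith)]
    nlinarith [mul_le_mul_of_nonneg_left hπu.le h0.le]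
  have hs0 : (0:ℝ) ≤ Real.sin (ξ / 2) := le_trans (by nlinarith) h1'
  rcases le_or_gt (ξ + ξ / 2) (π / 2) with h2 | h2
  · have h3 : 2 / π * (ξ + ξ / 2) ≤ Real.sin (ξ + ξ / 2) := Real.mul_le_sin (by linarith) h2
    have h3' : 0.95 * ξ ≤ Real.sin (ξ + ξ / 2) := by
      refine le_trans ?_ h3
      rw [div_mul_eq_mul_div, le_div_iff₀ (by linarith)]
      nlinarith [mul_le_mul_of_nonneg_left hπu.le h0.le]
    have hp := mul_le_mul h1' h3' (by nlinarith) hs0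
    nlinarith
  · have h4 : Real.sin (ξ + ξ / 2) = Real.cos (ξ + ξ / 2 - π / 2) := by
      rw [← Real.cos_pi_div_two_sub, show π / 2 - (ξ + ξ / 2) = -(ξ + ξ / 2 - π / 2) by ring,
        Real.cos_neg]
    have h5 : Real.sqrt 2 / 2 ≤ Real.sin (ξ + ξ / 2) := by
      rw [h4]
      have := Real.cos_le_cos_of_nonneg_of_le_pi (by linarith : (0:ℝ) ≤ ξ + ξ / 2 - π / 2)
        (by linarith : π / 4 ≤ π) (by linarith : ξ + ξ / 2 - π / 2 ≤ π / 4)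
      rwa [Real.cos_pi_div_four] at this
    have h5' : (0.707 : ℝ) ≤ Real.sin (ξ + ξ / 2) := by
      refine le_trans ?_ h5
      nlinarith [Real.sq_sqrt (by norm_num : (2:ℝ) ≥ 0), Real.sqrt_nonneg 2]
    have hp := mul_le_mul h1' h5' (by norm_num) hs0
    nlinarith

private lemma sqrt3_ge : (1.732 : ℝ) ≤ Real.sqrt 3 := by
  nlinarith [Real.sq_sqrt (by norm_num : (3:ℝ) ≥ 0), Real.sqrt_nonneg 3]

private lemma Jfun_spec {ε : ℝ} (hε0 : 0 < ε) (hε : ε ≤ π / 5) :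
    ∃ s ∈ Set.Icc (0:ℝ) (2 * π / 3), fS s = fS (π - ε) ∧ Jfun (π - ε) = s := by
  have hπl : (3.1415 : ℝ) < π := by linarith [Real.pi_gt_d6]
  have hπu : π < (3.1416 : ℝ) := by linarith [Real.pi_lt_d6]
  have hf0 : fS 0 = 0 := by simp [fS]
  have h23 : fS (2 * π / 3) = Real.sqrt 3 / 2 * (Real.sqrt 3 / 2) ^ 2 := by
    rw [fS, show 2 * π / 3 = π - π / 3 by ring, Real.sin_pi_sub,
      show (π - π / 3) / 2 = π - 2 * π / 3 by ring, Real.sin_pi_sub,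
      show 2 * π / 3 = π - π / 3 by ring, Real.sin_pi_sub, Real.sin_pi_div_three]
  have hup : fS (π - ε) ≤ ε := fS_pi_sub_le hε0.le (by linarith)
  have hlow : 0 ≤ fS (π - ε) := by
    apply mul_nonneg (Real.sin_nonneg_of_nonneg_of_le_pi (by linarith) (by linarith)) (sq_nonneg _)
  have hmem : fS (π - ε) ∈ Set.Icc (fS 0) (fS (2 * π / 3)) := by
    constructor
    · rw [hf0]; exact hlow
    · rw [h23]
      nlinarith [sqrt3_ge, Real.sqrt_nonneg 3]
  obtain ⟨s, hs, hfs⟩ := intermediate_value_Icc (by positivity : (0:ℝ) ≤ 2 * π / 3)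
    fS_cont.continuousOn hmem
  exact ⟨s, hs, hfs, Jfun_eq ⟨by linarith, by linarith⟩ hs hfs⟩

private lemma theta_even (m j : ℕ) (h : j ≤ m) :
    theta (2 * m) j = 2 * (j : ℝ) * π / (2 * (m : ℝ) + 1) := by
  rw [theta, if_pos (by omega : j ≤ 2 * m / 2), thetaAux, if_pos (by omega : 2 * m % 2 = 0)]
  push_cast
  ring_nf

private lemma theta_mid (n : ℕ) (hn : 1 ≤ n) :
    theta n (n / 2) = Real.pi - Real.pi / ((n : ℝ) + 1) := by
  rw [theta, if_pos le_rfl, thetaAux]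
  rcases Nat.even_or_odd n with ⟨a, ha⟩ | ⟨a, ha⟩
  · rw [if_pos (by omega)]
    have h2 : n / 2 = a := by omega
    have hc : (n : ℝ) = 2 * a := by rw [ha]; push_cast; ring
    rw [h2, hc]
    have : (2 * (a:ℝ) + 1) ≠ 0 := by positivity
    field_simp
    ring
  · rw [if_neg (by omega)]
    have h2 : n / 2 = a := by omega
    have hc : (n : ℝ) = 2 * a + 1 := by rw [ha]; push_cast; ring
    rw [h2, hc]
    have : (2 * (a:ℝ) + 1 + 1) ≠ 0 := by positivity
    field_simp
    ring

private lemma triv_j (j : ℕ) (hj1 : 1 ≤ j) (hj3 : j ≤ 3) :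
    ∃ n : ℕ, 2 * j ≤ n ∧ ((n : ℝ) + 1) ^ ((4:ℝ)/3) *
      |Jfun (Real.pi - Real.pi / ((n : ℝ) + 1)) - theta n j| ≤ 10000 := by
  have hπl : (3.1415 : ℝ) < π := by linarith [Real.pi_gt_d6]
  have hπu : π < (3.1416 : ℝ) := by linarith [Real.pi_lt_d6]
  refine ⟨2 * (j + 1), by omega, ?_⟩
  rw [theta_even (j + 1) j (by omega)]
  push_cast
  set N : ℝ := 2 * ((j:ℝ) + 1) + 1 with hNdef
  have hjr : (1:ℝ) ≤ (j:ℝ) := by exact_mod_cast hj1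
  have hjr3 : (j:ℝ) ≤ 3 := by exact_mod_cast hj3
  have hN5 : (5:ℝ) ≤ N := by rw [hNdef]; linarith
  have hN9 : N ≤ 9 := by rw [hNdef]; linarith
  have hN0 : (0:ℝ) < N := by linarith
  have hε0 : 0 < π / N := by positivity
  have hε : π / N ≤ π / 5 :=
    div_le_div_of_nonneg_left Real.pi_pos.le (by norm_num) hN5
  obtain ⟨s, hsmem, hfs, hJ⟩ := Jfun_spec hε0 hε
  rw [hJ]
  have hθ0 : (0:ℝ) ≤ 2 * (j:ℝ) * π / N := by positivity
  have hθ23 : 2 * (j:ℝ) * π / N ≤ 2 * π / 3 := by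
    rw [div_le_div_iff₀ hN0 (by norm_num)]
    nlinarith [Real.pi_pos]
  have habs : |s - 2 * (j:ℝ) * π / N| ≤ 2 * π / 3 := by
    rw [abs_le]
    constructor
    · linarith [hsmem.1]
    · linarith [hsmem.2]
  have hrpow : N ^ ((4:ℝ)/3) ≤ 81 := by
    have h1 : N ^ ((4:ℝ)/3) ≤ N ^ ((2:ℕ):ℝ) :=
      Real.rpow_le_rpow_of_exponent_le (by linarith) (by norm_num)
    rw [Real.rpow_natCast] at h1
    nlinarith
  calc N ^ ((4:ℝ)/3) * |s - 2 * (j:ℝ) * π / N| ≤ 81 * (2 * π / 3) :=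
        mul_le_mul hrpow habs (abs_nonneg _) (by norm_num)
    _ ≤ 10000 := by nlinarith


private lemma pi_lb : (3.1415 : ℝ) < π := by linarith [Real.pi_gt_d6]
private lemma pi_ub : π < (3.1416 : ℝ) := by linarith [Real.pi_lt_d6]

private lemma one_div_le_fS {N : ℝ} (hN : 2 ≤ N) : 1 / N ≤ fS (π - π / N) := by
  have hπ0 := Real.pi_pos
  have hN0 : (0:ℝ) < N := by linarith
  have h := fS_pi_sub_ge (ε := π / N) (by positivity)
    (div_le_div_of_nonneg_left hπ0.le (by norm_num) hN)
  have heq : π / N / π = 1 / N := by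
    rw [div_div, mul_comm, ← div_div, div_self hπ0.ne']
  rwa [heq] at h

private lemma exists_crossing (j : ℕ) (hj : 3 ≤ j) :
    ∃ m : ℕ, j + 1 ≤ m ∧
      fS (2 * (j:ℝ) * π / (2 * (m:ℝ) + 1)) ≤ fS (π - π / (2 * (m:ℝ) + 1)) := by
  have hπl := pi_lb; have hπu := pi_ub; have hπ0 := Real.pi_pos
  have hπ2 : π ^ 2 ≤ 9.87 := by nlinarith
  have hπ3 : π ^ 3 ≤ 32 := by nlinarith
  have hjr : (3:ℝ) ≤ (j:ℝ) := by exact_mod_cast hj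
  refine ⟨10 * j ^ 2, ?_, ?_⟩
  · nlinarith [hj]
  · have hMc : ((10 * j ^ 2 : ℕ) : ℝ) = 10 * (j:ℝ)^2 := by push_cast; ring
    rw [hMc]
    set Nb : ℝ := 2 * (10 * (j:ℝ)^2) + 1 with hNb
    have hNbge : 20 * (j:ℝ)^2 ≤ Nb := by rw [hNb]; linarith
    have hNb0 : (0:ℝ) < Nb := by nlinarith
    have hlow : 1 / Nb ≤ fS (π - π / Nb) := one_div_le_fS (by nlinarith)
    have hup : fS (2 * (j:ℝ) * π / Nb) ≤ (2 * (j:ℝ) * π / Nb) ^ 3 / 4 :=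
      fS_le_cube (by positivity)
    have hkey : (2 * (j:ℝ) * π / Nb) ^ 3 / 4 ≤ 1 / Nb := by
      rw [div_le_div_iff₀ (by norm_num) hNb0, div_pow,
        div_mul_eq_mul_div, div_le_iff₀ (by positivity)]
      have h1 : (2 * (j:ℝ) * π) ^ 3 ≤ 256 * (j:ℝ)^3 := by
        have := mul_le_mul_of_nonneg_left hπ3 (by positivity : (0:ℝ) ≤ 8 * (j:ℝ)^3)
        nlinarith
      have hj43 : (j:ℝ)^3 ≤ (j:ℝ)^4 := by
        nlinarith [mul_nonneg (pow_nonneg (by positivity : (0:ℝ) ≤ (j:ℝ)) 3)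
          (by linarith : (0:ℝ) ≤ (j:ℝ) - 1)]
      have hsq : (20 * (j:ℝ)^2)^2 ≤ Nb^2 := by nlinarith
      have h3 : 256 * (j:ℝ)^3 ≤ 4 * Nb^2 := by nlinarith
      have h4 := mul_le_mul_of_nonneg_right h1 hNb0.le
      have h5 := mul_le_mul_of_nonneg_right h3 hNb0.le
      nlinarith
    linarith

private lemma base_fail (j : ℕ) (hj : 3 ≤ j) :
    fS (π - π / (2 * ((j:ℝ) + 1) + 1)) <
      fS (2 * (j:ℝ) * π / (2 * ((j:ℝ) + 1) + 1)) := by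
  have hπl := pi_lb; have hπu := pi_ub; have hπ0 := Real.pi_pos
  have hjr : (3:ℝ) ≤ (j:ℝ) := by exact_mod_cast hj
  set Nb : ℝ := 2 * ((j:ℝ) + 1) + 1 with hNb
  have hNb0 : (0:ℝ) < Nb := by rw [hNb]; linarith
  have hθmem : 2 * (j:ℝ) * π / Nb ∈ Set.Icc (2 * π / 3) π := by
    constructor
    · rw [div_le_div_iff₀ (by norm_num : (0:ℝ) < 3) hNb0]
      rw [hNb]
      nlinarith [mul_le_mul_of_nonneg_right (show (6:ℝ) ≤ 2*(j:ℝ) by linarith) hπ0.le]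
    · rw [div_le_iff₀ hNb0]
      rw [hNb]
      nlinarith [mul_le_mul_of_nonneg_right hjr hπ0.le, hπ0]
  have htmem : π - π / Nb ∈ Set.Icc (2 * π / 3) π := by
    constructor
    · have : π / Nb ≤ π / 3 := div_le_div_of_nonneg_left hπ0.le (by norm_num)
        (by rw [hNb]; linarith)
      linarith
    · have : 0 ≤ π / Nb := by positivity
      linarith
  have hlt2 : 2 * (j:ℝ) * π / Nb < π - π / Nb := by
    have h1 : 2 * (j:ℝ) * π / Nb + π / Nb = (2 * (j:ℝ) * π + π) / Nb := by ring
    have h2 : (2 * (j:ℝ) * π + π) / Nb < π := by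
      rw [div_lt_iff₀ hNb0]; rw [hNb]
      nlinarith [mul_le_mul_of_nonneg_right hjr hπ0.le, hπ0]
    linarith
  exact fS_anti hθmem htmem hlt2

private lemma est1 {jr N θ θ'' : ℝ} (hjr : 3 ≤ jr) (hN : 2 * jr + 5 ≤ N)
    (hθd : θ = 2 * jr * π / N) (hθ''d : θ'' = 2 * jr * π / (N - 2))
    (hP5 : fS (π - π / (N - 2)) < fS θ'') :
    2.65 ≤ θ ^ 3 * N ∧ θ * N = θ'' * (N - 2) ∧ 0 < θ ∧ 0 < θ'' := by
  have hπ0 := Real.pi_pos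
  have hN11 : (11:ℝ) ≤ N := by linarith
  have hN0 : (0:ℝ) < N := by linarith
  have hN2 : (0:ℝ) < N - 2 := by linarith
  have hθ0 : 0 < θ := by rw [hθd]; positivity
  have hθ''0 : 0 < θ'' := by rw [hθ''d]; positivity
  have hrel : θ * N = θ'' * (N - 2) := by rw [hθd, hθ''d]; field_simp
  have hft'_low : 1 / (N - 2) ≤ fS (π - π / (N - 2)) := one_div_le_fS (by linarith)
  have h6 : fS θ'' ≤ θ'' ^ 3 / 4 := fS_le_cube hθ''0.le
  have hθ''cube : 4 * (1 / (N - 2)) < θ'' ^ 3 := by linarith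
  have hθ''cube2 : 4 < θ'' ^ 3 * (N - 2) := by
    have e : 4 * (1 / (N - 2)) * (N - 2) = 4 := by field_simp
    nlinarith [mul_lt_mul_of_pos_right hθ''cube hN2]
  refine ⟨?_, hrel, hθ0, hθ''0⟩
  -- θ^3 * N^3 = θ''^3 * (N-2)^3 > 4 (N-2)^2 ; and 4 (N-2)^2 ≥ 2.65 N^2
  have e3 : θ ^ 3 * N ^ 3 = θ'' ^ 3 * (N - 2) ^ 3 := by
    have := congrArg (fun x : ℝ => x ^ 3) hrel
    simpa [mul_pow] using this
  have h7 : 4 * (N - 2) ^ 2 < θ ^ 3 * N ^ 3 := by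
    nlinarith [mul_lt_mul_of_pos_right hθ''cube2 (mul_pos hN2 hN2)]
  have h8 : 2.65 * N ^ 2 ≤ 4 * (N - 2) ^ 2 := by nlinarith [sq_nonneg (N - 11)]
  nlinarith [h7, h8, mul_pos hN0 hN0]

private lemma est2 {jr N θ s : ℝ} (hjr : 3 ≤ jr) (hN : 2 * jr + 5 ≤ N)
    (hθd : θ = 2 * jr * π / N) (hP4 : fS θ ≤ fS (π - π / N))
    (hsmem : s ∈ Set.Icc (0:ℝ) (2 * π / 3)) (hfs : fS s = fS (π - π / N)) :
    θ ≤ s ∧ s ≤ π / 2 ∧ s ^ 3 * N ≤ 49 := by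
  have hπl := pi_lb; have hπu := pi_ub; have hπ0 := Real.pi_pos
  have hπ2 : π ^ 2 ≤ 9.87 := by nlinarith
  have hN11 : (11:ℝ) ≤ N := by linarith
  have hN0 : (0:ℝ) < N := by linarith
  have hθ0 : 0 < θ := by rw [hθd]; positivity
  have hft_up : fS (π - π / N) ≤ π / N :=
    fS_pi_sub_le (by positivity) (div_le_self hπ0.le (by linarith))
  have hθ23 : θ ≤ 2 * π / 3 := by
    by_contra hcon
    push_neg at hcon
    have hθπ : θ ≤ π := by
      rw [hθd, div_le_iff₀ hN0]
      nlinarith [mul_le_mul_of_nonneg_right (show 2*jr ≤ N by linarith) hπ0.le]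
    have htmem : π - π / N ∈ Set.Icc (2 * π / 3) π := by
      constructor
      · have h : π / N ≤ π / 3 := div_le_div_of_nonneg_left hπ0.le (by norm_num) (by linarith)
        linarith
      · have h : 0 ≤ π / N := by positivity
        linarith
    have hlt2 : θ < π - π / N := by
      have h1 : θ + π / N = (2 * jr * π + π) / N := by rw [hθd]; ring
      have h2 : (2 * jr * π + π) / N < π := by
        rw [div_lt_iff₀ hN0]
        nlinarith [mul_lt_mul_of_pos_right (show 2*jr + 1 < N by linarith) hπ0]
      linarith
    have := fS_anti ⟨hcon.le, hθπ⟩ htmem hlt2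
    linarith
  have hθs : θ ≤ s := by
    by_contra hcon
    push_neg at hcon
    have := fS_mono hsmem ⟨hθ0.le, hθ23⟩ hcon
    linarith [hP4, hfs.ge, hfs.le]
  have hs2 : s ≤ π / 2 := by
    by_contra hcon
    push_neg at hcon
    have hmem2 : π / 2 ∈ Set.Icc (0:ℝ) (2 * π / 3) := by
      constructor <;> [positivity; linarith]
    have hmono := fS_mono hmem2 hsmem hcon
    have hhalf : fS (π / 2) = 1 / 2 := by
      rw [fS, show π / 2 / 2 = π / 4 by ring, Real.sin_pi_div_two, Real.sin_pi_div_four,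
        div_pow, Real.sq_sqrt (by norm_num : (0:ℝ) ≤ 2)]
      norm_num
    have hπN : π / N ≤ π / 11 := div_le_div_of_nonneg_left hπ0.le (by norm_num) hN11
    have hfsle : fS s ≤ π / N := by rw [hfs]; exact hft_up
    rw [hhalf] at hmono
    linarith
  refine ⟨hθs, hs2, ?_⟩
  have h := fS_ge_cube hsmem.1 hs2
  have h2 : 2 * s ^ 3 / π ^ 3 ≤ π / N := by
    have hfsle : fS s ≤ π / N := by rw [hfs]; exact hft_up
    linarith
  rw [div_le_div_iff₀ (by positivity) hN0] at h2
  have hπ4 : π * π ^ 3 ≤ 98 := by nlinarith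
  nlinarith [pow_nonneg hsmem.1 3, hN0]

private lemma est2b {N θ θ'' : ℝ} (hN11 : 11 ≤ N) (hθ0 : 0 < θ) (hθ''0 : 0 < θ'')
    (hrel : θ * N = θ'' * (N - 2)) (h49 : θ ^ 3 * N ≤ 49) : θ'' ^ 3 * N ≤ 90 := by
  have hN0 : (0:ℝ) < N := by linarith
  have hN2 : (0:ℝ) < N - 2 := by linarith
  have hq : 729 * N ^ 3 ≤ 1331 * (N - 2) ^ 3 := by
    nlinarith [mul_nonneg (by linarith : (0:ℝ) ≤ N - 11)
      (by nlinarith [sq_nonneg (N - 1.133)] : (0:ℝ) ≤ 602 * N ^ 2 - 1364 * N + 968)]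
  have e : θ'' ^ 3 * (N - 2) ^ 3 = θ ^ 3 * N ^ 3 := by
    have := congrArg (fun x : ℝ => x ^ 3) hrel
    simpa [mul_pow] using this.symm
  have h1 : θ'' ^ 3 * N * (N - 2) ^ 3 = θ ^ 3 * N * N ^ 3 := by
    linear_combination N * e
  have h2 : θ ^ 3 * N * N ^ 3 ≤ 49 * N ^ 3 :=
    mul_le_mul_of_nonneg_right h49 (by positivity)
  have h4 : θ'' ^ 3 * N * (N - 2) ^ 3 ≤ 90 * (N - 2) ^ 3 := by nlinarith [h1, h2, hq]
  nlinarith [h4, pow_pos hN2 3]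

private lemma est3 {N θ θ'' : ℝ} (hN11 : 11 ≤ N) (hθ0 : 0 < θ) (hθ''0 : 0 < θ'')
    (hrel : θ * N = θ'' * (N - 2)) (h90 : θ'' ^ 3 * N ≤ 90)
    (hP5 : fS (π - π / (N - 2)) < fS θ'') :
    (fS (π - π / N) - fS θ) * N ^ 2 ≤ 143 := by
  have hπl := pi_lb; have hπu := pi_ub; have hπ0 := Real.pi_pos
  have hN0 : (0:ℝ) < N := by linarith
  have hN2 : (0:ℝ) < N - 2 := by linarith
  have hΔN : (θ'' - θ) * N = 2 * θ'' := by linear_combination (-1 : ℝ) * hrel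
  have hΔpos : 0 < θ'' - θ := by nlinarith [hΔN]
  -- θ-side step
  obtain ⟨ξ₁, hξ₁, he₁⟩ := fS_slope (show θ < θ'' by linarith)
  have hξ₁0 : 0 < ξ₁ := lt_trans hθ0 hξ₁.1
  have hub : Real.sin (ξ₁ / 2) * Real.sin (ξ₁ + ξ₁ / 2) ≤ 3 * θ'' ^ 2 / 4 := by
    refine le_trans (le_abs_self _) (le_trans (fderiv_abs_le hξ₁0.le) ?_)
    nlinarith [hξ₁.1.le, hξ₁.2.le, hθ0.le, hξ₁0.le]
  have hstepθ : (fS θ'' - fS θ) * N ^ 2 ≤ 135 := by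
    have e1 : (fS θ'' - fS θ) * N ^ 2
        = (Real.sin (ξ₁ / 2) * Real.sin (ξ₁ + ξ₁ / 2)) * ((θ'' - θ) * N * N) := by
      rw [he₁]; ring
    rw [e1, hΔN]
    have hg0 : 0 ≤ 2 * θ'' * N := by positivity
    have := mul_le_mul_of_nonneg_right hub hg0
    nlinarith [h90, this, mul_pos hθ''0 hN0]
  -- t-side step
  have htt' : π - π / (N - 2) < π - π / N := by
    have h : π / N < π / (N - 2) := div_lt_div_of_pos_left hπ0 hN2 (by linarith)
    linarith
  obtain ⟨ξ₂, hξ₂, he₂⟩ := fS_slope htt'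
  have hstept : (fS (π - π / N) - fS (π - π / (N - 2))) * N ^ 2 ≤ 7.8 := by
    have hdN : ((π - π / N) - (π - π / (N - 2))) * N ^ 2 = 2 * π * N / (N - 2) := by
      field_simp
      ring
    have hd2 : 2 * π * N / (N - 2) ≤ 7.8 := by
      rw [div_le_iff₀ hN2]
      nlinarith [mul_le_mul_of_nonneg_right hπu.le hN0.le]
    have hs1 : Real.sin (ξ₂ / 2) * Real.sin (ξ₂ + ξ₂ / 2) ≤ 1 :=
      le_trans (le_abs_self _) (abs_sin_mul_le_one _ _)
    have e2 : (fS (π - π / N) - fS (π - π / (N - 2))) * N ^ 2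
        = (Real.sin (ξ₂ / 2) * Real.sin (ξ₂ + ξ₂ / 2)) *
          (((π - π / N) - (π - π / (N - 2))) * N ^ 2) := by
      rw [he₂]; ring
    rw [e2, hdN]
    have hd0 : 0 ≤ 2 * π * N / (N - 2) := by positivity
    nlinarith [mul_le_mul_of_nonneg_right hs1 hd0]
  -- middle term
  have hmid : (fS (π - π / (N - 2)) - fS θ'') * N ^ 2 ≤ 0 :=
    mul_nonpos_of_nonpos_of_nonneg (by linarith) (by positivity)
  nlinarith [hstepθ, hstept, hmid]

private lemma est4 {N θ s : ℝ} (hN11 : 11 ≤ N) (hθ0 : 0 < θ) (hθs : θ ≤ s)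
    (hs2 : s ≤ π / 2) (hθ3 : 2.65 ≤ θ ^ 3 * N) (hD : (fS s - fS θ) * N ^ 2 ≤ 143) :
    N ^ ((4:ℝ)/3) * (s - θ) ≤ 10000 := by
  have hN0 : (0:ℝ) < N := by linarith
  set A : ℝ := N ^ ((1:ℝ)/3) with hAdef
  have hA0 : 0 < A := Real.rpow_pos_of_pos hN0 _
  have hA3 : A ^ (3:ℕ) = N := by
    rw [hAdef, ← Real.rpow_natCast (N ^ ((1:ℝ)/3)) 3, ← Real.rpow_mul hN0.le]
    norm_num
  have hA4eq : N ^ ((4:ℝ)/3) = A ^ (4:ℕ) := by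
    rw [hAdef, ← Real.rpow_natCast (N ^ ((1:ℝ)/3)) 4, ← Real.rpow_mul hN0.le]
    norm_num
  rw [hA4eq]
  rcases eq_or_lt_of_le hθs with heq | hlt
  · rw [← heq, sub_self, mul_zero]
    norm_num
  · obtain ⟨ξ₃, hξ₃, he₃⟩ := fS_slope hlt
    have hξ₃0 : 0 < ξ₃ := lt_trans hθ0 hξ₃.1
    have hξ₃2 : ξ₃ ≤ π / 2 := le_of_lt (lt_of_lt_of_le hξ₃.2 hs2)
    have hflow := fderiv_low hξ₃0 hξ₃2
    have hθA : 1.3 ≤ θ * A := by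
      have hc : (1.3:ℝ) ^ (3:ℕ) ≤ (θ * A) ^ (3:ℕ) := by
        have e : (θ * A) ^ (3:ℕ) = θ ^ 3 * N := by rw [mul_pow, hA3]
        rw [e]
        nlinarith
      exact le_of_pow_le_pow_left₀ (by norm_num) (by positivity) hc
    have hξsq : θ ^ 2 ≤ ξ₃ ^ 2 := by nlinarith [hθ0.le, hξ₃.1.le]
    have hge : θ ^ 2 / 8 * (s - θ) ≤ fS s - fS θ := by
      rw [he₃]
      refine mul_le_mul_of_nonneg_right ?_ (by linarith)
      calc θ ^ 2 / 8 ≤ ξ₃ ^ 2 / 8 := by linarith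
        _ ≤ _ := hflow
    -- multiply by N² = A⁶
    have hA6 : A ^ (6:ℕ) = N ^ 2 := by
      have h : A ^ (6:ℕ) = (A ^ (3:ℕ)) ^ 2 := by ring
      rw [h, hA3]
    have h2 : θ ^ 2 / 8 * (s - θ) * N ^ 2 ≤ 143 := by
      nlinarith [mul_le_mul_of_nonneg_right hge (by positivity : (0:ℝ) ≤ N ^ 2), hD]
    have e4 : θ ^ 2 / 8 * (s - θ) * N ^ 2
        = (θ * A) ^ 2 * ((s - θ) * A ^ (4:ℕ)) / 8 := by
      rw [← hA6]; ring
    rw [e4] at h2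
    have hsθA : 0 ≤ (s - θ) * A ^ (4:ℕ) := mul_nonneg (by linarith) (by positivity)
    have hθA2 : 1.69 ≤ (θ * A) ^ 2 := by nlinarith [hθA]
    have hp : 1.69 * ((s - θ) * A ^ (4:ℕ)) ≤ (θ * A) ^ 2 * ((s - θ) * A ^ (4:ℕ)) :=
      mul_le_mul_of_nonneg_right hθA2 hsθA
    linarith [h2, hp]

set_option maxHeartbeats 1000000 in
private lemma main_j (j : ℕ) (hj : 3 ≤ j) :
    ∃ n : ℕ, 2 * j ≤ n ∧ ((n : ℝ) + 1) ^ ((4:ℝ)/3) *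
      |Jfun (Real.pi - Real.pi / ((n : ℝ) + 1)) - theta n j| ≤ 10000 := by
  classical
  have hπ0 := Real.pi_pos
  have hjr : (3:ℝ) ≤ (j:ℝ) := by exact_mod_cast hj
  have hex := exists_crossing j hj
  have hPm := Nat.find_spec hex
  have hmin := fun k (hk : k < Nat.find hex) => Nat.find_min hex hk
  set m : ℕ := Nat.find hex with hmdef
  clear_value m
  clear hmdef
  have hjm : j + 1 ≤ m := hPm.1
  have hm2 : j + 2 ≤ m := by
    by_contra hcon
    have hmeq : m = j + 1 := by omega
    have htmp := hPm.2
    rw [hmeq] at htmp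
    push_cast at htmp
    linarith [base_fail j hj]
  have hnot := hmin (m - 1) (by omega)
  push_neg at hnot
  have hP5' := hnot (by omega)
  have hcast : ((m - 1 : ℕ) : ℝ) = (m:ℝ) - 1 := by
    rw [Nat.cast_sub (by omega : 1 ≤ m)]; norm_num
  rw [hcast] at hP5'
  refine ⟨2 * m, by omega, ?_⟩
  rw [theta_even m j (by omega)]
  push_cast
  set N : ℝ := 2 * (m:ℝ) + 1 with hNdef
  have hM2 : (j:ℝ) + 2 ≤ (m:ℝ) := by exact_mod_cast hm2
  have hNj : 2 * (j:ℝ) + 5 ≤ N := by rw [hNdef]; linarith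
  have hN11 : (11:ℝ) ≤ N := by linarith
  have hN0 : (0:ℝ) < N := by linarith
  have hNm1 : 2 * ((m:ℝ) - 1) + 1 = N - 2 := by rw [hNdef]; ring
  rw [hNm1] at hP5'
  have hP4 : fS (2 * (j:ℝ) * π / N) ≤ fS (π - π / N) := hPm.2
  obtain ⟨s, hsmem, hfs, hJ⟩ := Jfun_spec (ε := π / N) (by positivity)
    (div_le_div_of_nonneg_left hπ0.le (by norm_num) (by linarith))
  rw [hJ]
  obtain ⟨hθ3, hrel, hθ0, hθ''0⟩ := est1 hjr hNj rfl rfl hP5'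
  obtain ⟨hθs, hs2, hs3⟩ := est2 hjr hNj rfl hP4 hsmem hfs
  have h49 : (2 * (j:ℝ) * π / N) ^ 3 * N ≤ 49 := by
    have hx : (2 * (j:ℝ) * π / N) ^ 3 ≤ s ^ 3 := pow_le_pow_left₀ hθ0.le hθs 3
    exact le_trans (mul_le_mul_of_nonneg_right hx hN0.le) hs3
  have h90 := est2b hN11 hθ0 hθ''0 hrel h49
  have hD := est3 hN11 hθ0 hθ''0 hrel h90 hP5'
  have hDs : (fS s - fS (2 * (j:ℝ) * π / N)) * N ^ 2 ≤ 143 := by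
    rw [hfs]; exact hD
  have hfin := est4 hN11 hθ0 hθs hs2 hθ3 hDs
  have habs : |s - 2 * (j:ℝ) * π / N| = s - 2 * (j:ℝ) * π / N :=
    abs_of_nonneg (by linarith)
  rw [habs]
  exact hfin

/-- There is `c > 0` such that every `j ≥ 1` admits `n ≥ 2j` with
`(n+1)^{4/3}·|J(π − π/(n+1)) − θ_{n,j}| ≤ c`; together with the noted identity
`θ_{n,⌊n/2⌋} = π − π/(n+1)` for all `n ≥ 1`. -/
theorem stmt8 :
    (∀ n : ℕ, 1 ≤ n → theta n (n / 2) = Real.pi - Real.pi / ((n : ℝ) + 1)) ∧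
    ∃ c > (0 : ℝ), ∀ j : ℕ, 1 ≤ j → ∃ n : ℕ, 2 * j ≤ n ∧
      ((n : ℝ) + 1) ^ ((4 : ℝ) / 3) *
        |Jfun (Real.pi - Real.pi / ((n : ℝ) + 1)) - theta n j| ≤ c := by
  constructor
  · exact fun n hn => theta_mid n hn
  · refine ⟨10000, by norm_num, ?_⟩
    intro j hj
    rcases le_or_gt j 3 with h | h
    · exact triv_j j hj h
    · exact main_j j (by omega)
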